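/- The cubic threefold X₅ = {x₀²x₂ + x₁²x₃ + x₁x₂² + x₀x₃² + x₁x₃² + x₄³ = 0} ⊂ ℙ⁴ is smooth and has no Eckardt points, yet contains the triple line ℓ = {x₂ = x₃ = x₄ = 0}: the plane {x₂ = x₃ = 0} meets X₅ in 3ℓ. -/

import Mathlib

/-!
Smoothness: the four partials in `x₀, …, x₃` are quadrics whose only common zero is the origin,
so the ideal they generate contains `x₀⁵`; once `x₀ = 0` the others vanish one after another.

No Eckardt points: the polar matrix at `p` is block diagonal, a `4 × 4` block `A(p)` and the
entry `3 p₄`. If `p₄ ≠ 0`, rank `≤ 2` forces rank `A(p) ≤ 1`, whose `2 × 2` minors kill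
`p₀, …, p₃`, and then `f(p) = p₄³ ≠ 0`. If `p₄ = 0`, the ideal generated by the `3 × 3` minors of
`A(p)` and the cubic contains `p₂ (p₀p₁ + p₂p₃)` and `p₃ (p₀p₂ + p₁p₃ - 2p₂²)`. When `p₂p₃ ≠ 0`
the second factors vanish, which yields the linear relation `p₀ + 5p₁ = 3p₂ + 3p₃` and then
`p₂p₃² = 0`; when `p₃ = 0` the minors give `p₂³ = 0`. So `p₂ = 0`, after which the minors kill
`p₃`, `p₁`, `p₀` in turn.
-/
theorem Matrix.det_submatrix_eq_zero_of_rank_lt {m n R : Type*} [Fintype n] [CommRing R]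
    [IsDomain R] {k : ℕ} (A : Matrix m n R) (r : Fin k → m) (c : Fin k → n) (h : A.rank < k) :
    (A.submatrix r c).det = 0 := by
  by_contra hdet
  have hsub : (A.submatrix r c).rank = k := by simpa using Matrix.rank_of_det_ne_zero hdet
  have := A.rank_submatrix_le r c
  omega

namespace X₅

def cubic (x : Fin 5 → ℂ) : ℂ :=
  x 0 ^ 2 * x 2 + x 1 ^ 2 * x 3 + x 1 * x 2 ^ 2 + x 0 * x 3 ^ 2 + x 1 * x 3 ^ 2 + x 4 ^ 3

/-- Half the Hessian of `cubic` at `p`: the matrix of the polar quadric `∑ pᵢ ∂ᵢ cubic`. -/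
def polarMatrix (p : Fin 5 → ℂ) : Matrix (Fin 5) (Fin 5) ℂ :=
  !![p 2, 0, p 0, p 3, 0;
     0, p 3, p 2, p 1 + p 3, 0;
     p 0, p 2, p 1, 0, 0;
     p 3, p 1 + p 3, 0, p 0 + p 1, 0;
     0, 0, 0, 0, 3 * p 4]

theorem eq_zero_of_partials_eq_zero (x : Fin 5 → ℂ)
    (h0 : 2 * x 0 * x 2 + x 3 ^ 2 = 0) (h1 : 2 * x 1 * x 3 + x 2 ^ 2 + x 3 ^ 2 = 0)
    (h2 : x 0 ^ 2 + 2 * x 1 * x 2 = 0) (h3 : x 1 ^ 2 + 2 * x 0 * x 3 + 2 * x 1 * x 3 = 0)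
    (h4 : 3 * x 4 ^ 2 = 0) : x = 0 := by
  -- a Nullstellensatz certificate, found by solving the linear system over `ℚ` in degree 5
  have hx0 : x 0 = 0 := by
    linear_combination (exp := 5) (1 / 10143 : ℂ) *
      ((640 * x 0 ^ 2 * x 2 + 500 * x 0 * x 1 ^ 2 + 128 * x 0 * x 1 * x 2
          + 4000 * x 0 * x 1 * x 3 + 1600 * x 0 * x 2 ^ 2 + 21536 * x 1 ^ 2 * x 2
          + 1600 * x 1 * x 2 ^ 2) * h0
        + (-3200 * x 0 ^ 2 * x 2 - 2500 * x 0 * x 1 ^ 2 - 640 * x 0 * x 1 * x 2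
          - 4000 * x 0 * x 1 * x 3 + 512 * x 1 ^ 2 * x 2) * h1
        + (10143 * x 0 ^ 3 - 20286 * x 0 * x 1 * x 2 - 1280 * x 0 * x 2 ^ 2
          + 2000 * x 0 * x 2 * x 3 - 256 * x 1 * x 2 ^ 2 + 400 * x 1 * x 2 * x 3
          - 10000 * x 1 * x 3 ^ 2) * h2
        + (-1000 * x 0 ^ 2 * x 2 + 5000 * x 0 * x 1 * x 3 + 1280 * x 0 * x 2 * x 3
          - 1024 * x 1 * x 2 * x 3 - 800 * x 2 ^ 2 * x 3) * h3)
  have hx3 : x 3 = 0 := by linear_combination (exp := 2) h0 - 2 * x 2 * hx0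
  have hx2 : x 2 = 0 := by linear_combination (exp := 2) h1 - (2 * x 1 + x 3) * hx3
  have hx1 : x 1 = 0 := by linear_combination (exp := 2) h3 - 2 * x 3 * hx0 - 2 * x 1 * hx3
  have hx4 : x 4 = 0 := by linear_combination (exp := 2) h4 / 3
  funext i
  fin_cases i <;> assumption

section Eckardt

variable {p : Fin 5 → ℂ}

theorem det_submatrix_polarMatrix_eq_zero (h : (polarMatrix p).rank ≤ 2)
    (r c : Fin 3 → Fin 5) : ((polarMatrix p).submatrix r c).det = 0 :=
  (polarMatrix p).det_submatrix_eq_zero_of_rank_lt r c (by omega)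

theorem apply_four_eq_zero_of_rank_polarMatrix_le_two (hfp : cubic p = 0)
    (h : (polarMatrix p).rank ≤ 2) : p 4 = 0 := by
  by_contra h4
  have minor := det_submatrix_polarMatrix_eq_zero h
  have m014_024 := minor ![0, 1, 4] ![0, 2, 4]
  have m014_134 := minor ![0, 1, 4] ![1, 3, 4]
  have m024_024 := minor ![0, 2, 4] ![0, 2, 4]
  have m234_234 := minor ![2, 3, 4] ![2, 3, 4]
  simp only [Matrix.det_fin_three, Matrix.submatrix_apply, polarMatrix, Matrix.of_apply,
    Matrix.cons_val] at m014_024 m014_134 m024_024 m234_234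
  have h2 : p 2 = 0 := by
    simpa [h4] using (show p 4 * p 2 ^ 2 = 0 by linear_combination m014_024 / 3)
  have h3 : p 3 = 0 := by
    simpa [h4] using (show p 4 * p 3 ^ 2 = 0 by linear_combination -m014_134 / 3)
  have h0 : p 0 = 0 := by
    simpa [h4] using
      (show p 4 * p 0 ^ 2 = 0 by linear_combination -m024_024 / 3 + p 1 * p 4 * h2)
  have h1 : p 1 = 0 := by
    simpa [h4] using
      (show p 4 * p 1 ^ 2 = 0 by linear_combination m234_234 / 3 - p 1 * p 4 * h0)
  exact h4 (by simpa [cubic, h0, h1, h2, h3] using hfp)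

theorem apply_two_eq_zero_of_rank_polarMatrix_le_two (hfp : cubic p = 0)
    (h : (polarMatrix p).rank ≤ 2) : p 2 = 0 := by
  have h4 := apply_four_eq_zero_of_rank_polarMatrix_le_two hfp h
  rw [cubic, h4] at hfp
  have minor := det_submatrix_polarMatrix_eq_zero h
  have m012_012 := minor ![0, 1, 2] ![0, 1, 2]
  have m012_013 := minor ![0, 1, 2] ![0, 1, 3]
  have m012_123 := minor ![0, 1, 2] ![1, 2, 3]
  have m013_023 := minor ![0, 1, 3] ![0, 2, 3]
  have m013_123 := minor ![0, 1, 3] ![1, 2, 3]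
  have m023_123 := minor ![0, 2, 3] ![1, 2, 3]
  simp only [Matrix.det_fin_three, Matrix.submatrix_apply, polarMatrix, Matrix.of_apply,
    Matrix.cons_val] at m012_012 m012_013 m012_123 m013_023 m013_123 m023_123
  by_contra h2
  have q1 : p 0 * p 1 + p 2 * p 3 = 0 := by
    refine (mul_eq_zero.1 ?_).resolve_left h2
    linear_combination -m012_013 - m023_123 - hfp
  by_cases h3 : p 3 = 0
  · exact h2 (by linear_combination (exp := 3) -m012_012 + (p 1 * p 2 - p 0 ^ 2) * h3)
  have q2 : p 0 * p 2 + p 1 * p 3 - 2 * p 2 ^ 2 = 0 := by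
    refine (mul_eq_zero.1 ?_).resolve_left h3
    linear_combination m012_013 + m012_123 + m023_123 + hfp
  have hL : p 0 + 5 * p 1 - 3 * p 2 - 3 * p 3 = 0 := by
    refine (mul_eq_zero.1 ?_).resolve_left (mul_ne_zero h2 h3)
    linear_combination 2 * m012_012 + 2 * m012_013 + m012_123 + 3 * m013_023 - 2 * m013_123
      + 2 * m023_123 + hfp + (2 * p 1 - 2 * p 3) * q1 + (p 0 + p 1 - p 2) * q2
  -- certificate found by linear algebra in degree 3
  have : p 2 * p 3 ^ 2 = 0 := by
    linear_combination (30 * m012_012 + 23 * m012_013 + 23 * m013_023 - 45 * m013_123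
      + (45 * p 1 - 40 * p 2 + 105 * p 3) * q1 + (-8 * p 0 - 15 * p 2) * q2
      + (8 * p 0 * p 2 - 15 * p 0 * p 3 - 21 * p 2 * p 3) * hL) / 190
  simp [h2, h3] at this

theorem eq_zero_of_rank_polarMatrix_le_two (hfp : cubic p = 0)
    (h : (polarMatrix p).rank ≤ 2) : p = 0 := by
  have h4 := apply_four_eq_zero_of_rank_polarMatrix_le_two hfp h
  have h2 := apply_two_eq_zero_of_rank_polarMatrix_le_two hfp h
  have minor := det_submatrix_polarMatrix_eq_zero h
  have m013_013 := minor ![0, 1, 3] ![0, 1, 3]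
  have m123_123 := minor ![1, 2, 3] ![1, 2, 3]
  have m023_023 := minor ![0, 2, 3] ![0, 2, 3]
  simp only [Matrix.det_fin_three, Matrix.submatrix_apply, polarMatrix, Matrix.of_apply,
    Matrix.cons_val, h2] at m013_013 m123_123 m023_023
  have h3 : p 3 = 0 := by linear_combination (exp := 3) -m013_013
  have h1 : p 1 = 0 := by
    linear_combination (exp := 3) -m123_123 + (p 0 * p 1 - p 1 ^ 2 - p 1 * p 3) * h3
  have h0 : p 0 = 0 := by
    linear_combination (exp := 3) -m023_023 - (p 0 ^ 2 + p 3 ^ 2) * h1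
  funext i
  fin_cases i <;> assumption

end Eckardt

end X₅

/-- The cubic threefold `X₅ = {x₀²x₂ + x₁²x₃ + x₁x₂² + x₀x₃² + x₁x₃² + x₄³ = 0}` is
smooth, has no Eckardt points (every point of it has polar quadric of rank ≥ 3), yet
contains the triple line `ℓ = {x₂ = x₃ = x₄ = 0}`: the plane `{x₂ = x₃ = 0}` meets it
in `3ℓ`. -/
theorem stmt_16 (f : (Fin 5 → ℂ) → ℂ)
    (hf : ∀ x : Fin 5 → ℂ, f x = x 0 ^ 2 * x 2 + x 1 ^ 2 * x 3 + x 1 * x 2 ^ 2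
        + x 0 * x 3 ^ 2 + x 1 * x 3 ^ 2 + x 4 ^ 3) :
    (∀ x : Fin 5 → ℂ,
        2 * x 0 * x 2 + x 3 ^ 2 = 0 →
        2 * x 1 * x 3 + x 2 ^ 2 + x 3 ^ 2 = 0 →
        x 0 ^ 2 + 2 * x 1 * x 2 = 0 →
        x 1 ^ 2 + 2 * x 0 * x 3 + 2 * x 1 * x 3 = 0 →
        3 * x 4 ^ 2 = 0 → x = 0) ∧
    (∀ p : Fin 5 → ℂ, p ≠ 0 → f p = 0 →
      ¬ (!![p 2, 0, p 0, p 3, 0;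
            0, p 3, p 2, p 1 + p 3, 0;
            p 0, p 2, p 1, 0, 0;
            p 3, p 1 + p 3, 0, p 0 + p 1, 0;
            0, 0, 0, 0, 3 * p 4] : Matrix (Fin 5) (Fin 5) ℂ).rank ≤ 2) ∧
    (∀ t0 t1 : ℂ, f ![t0, t1, 0, 0, 0] = 0) ∧
    (∀ t0 t1 t2 : ℂ, f ![t0, t1, 0, 0, t2] = t2 ^ 3) := by
  obtain rfl : f = X₅.cubic := funext hf
  refine ⟨X₅.eq_zero_of_partials_eq_zero,
    fun p hp hfp hrank => hp (X₅.eq_zero_of_rank_polarMatrix_le_two hfp hrank), ?_, ?_⟩ <;>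
  · intros
    simp [X₅.cubic]
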